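/- (Corollary 8, part 𝒰 ⊆ 𝒱*) Let 𝒞 be a nonempty compact set of cost matrices and let 𝒱* be the unique nonempty compact set with F_𝒞(𝒱*) = 𝒱*. If C ∈ 𝒞 and V ∈ ℝ^S satisfies f_C(V) = V, then V ∈ 𝒱*. -/

import Mathlib

open Metric

/-- The Bellman operator for a discounted MDP with transition kernel `P`,
discount factor `γ` and cost matrix `C`. -/
noncomputable def bellman (S A : ℕ) (P : Fin S → Fin S → Fin A → ℝ) (γ : ℝ)
    (C : Fin S → Fin A → ℝ) (V : Fin S → ℝ) : Fin S → ℝ :=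
  fun s => ⨅ a : Fin A, (C s a + γ * ∑ s' : Fin S, P s' s a * V s')

/-- The set-based Bellman operator associated with a set `𝒞` of cost matrices. -/
noncomputable def setBellman (S A : ℕ) (P : Fin S → Fin S → Fin A → ℝ) (γ : ℝ)
    (𝒞 : Set (Fin S → Fin A → ℝ)) (𝒱 : Set (Fin S → ℝ)) : Set (Fin S → ℝ) :=
  closure (⋃ C ∈ 𝒞, ⋃ V ∈ 𝒱, {bellman S A P γ C V})

/-!
`f_C` is a `γ`-contraction in the sup norm: each coordinate is a minimum over finitely many
affine maps whose linear parts average against a probability vector. The fixed point `V` of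
`f_C` is therefore the limit of the iterates `f_C^[n] W` from any `W ∈ 𝒱*`. Since
`F_𝒞(𝒱*) = 𝒱*`, these iterates stay in `𝒱*`, which is closed, being a closure.
-/

open Set Function Filter Topology

theorem lipschitzWith_pi {α ι : Type*} [Fintype ι] {β : ι → Type*} [PseudoEMetricSpace α]
    [∀ i, PseudoEMetricSpace (β i)] {K : NNReal} {f : α → ∀ i, β i}
    (hf : ∀ i, LipschitzWith K fun x => f x i) : LipschitzWith K f :=
  fun x y => edist_pi_le_iff.2 fun i => hf i x y

-- For empty `ι` the infimum is the junk value `0`, a constant map.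
theorem LipschitzWith.iInf_of_finite {α ι : Type*} [Finite ι] [PseudoMetricSpace α]
    {K : NNReal} {f : ι → α → ℝ} (hf : ∀ i, LipschitzWith K (f i)) :
    LipschitzWith K fun x => ⨅ i, f i x := by
  cases isEmpty_or_nonempty ι
  · simpa only [Real.iInf_of_isEmpty] using LipschitzWith.const' (0 : ℝ)
  refine LipschitzWith.of_le_add_mul K fun x y => ?_
  rw [← sub_le_iff_le_add]
  refine le_ciInf fun i => ?_
  have hx : ⨅ j, f j x ≤ f i x := ciInf_le (Set.finite_range _).bddBelow i
  linarith [(hf i).le_add_mul x y]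

theorem lipschitzWith_sum_mul {ι : Type*} [Fintype ι] {p : ι → ℝ} (hp0 : ∀ i, 0 ≤ p i)
    (hp1 : ∑ i, p i = 1) : LipschitzWith 1 fun V : ι → ℝ => ∑ i, p i * V i := by
  refine LipschitzWith.of_dist_le_mul fun V W => ?_
  rw [NNReal.coe_one, one_mul, Real.dist_eq, ← Finset.sum_sub_distrib]
  calc |∑ i, (p i * V i - p i * W i)| ≤ ∑ i, |p i * V i - p i * W i| :=
        Finset.abs_sum_le_sum_abs _ _
    _ ≤ ∑ i, p i * dist V W := by
        gcongr with i
        rw [← mul_sub, abs_mul, abs_of_nonneg (hp0 i), ← Real.dist_eq]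
        exact mul_le_mul_of_nonneg_left (dist_le_pi_dist V W i) (hp0 i)
    _ = dist V W := by rw [← Finset.sum_mul, hp1, one_mul]

theorem ContractingWith.mem_of_isFixedPt {α : Type*} [MetricSpace α] {K : NNReal}
    {f : α → α} (hf : ContractingWith K f) {s : Set α} (hs : IsClosed s) (hne : s.Nonempty)
    (hmaps : MapsTo f s s) {x : α} (hx : IsFixedPt f x) : x ∈ s := by
  obtain ⟨y, hy⟩ := hne
  have hdist (n : ℕ) : dist (f^[n] y) x ≤ K ^ n * dist y x := by
    simpa only [(hx.iterate n).eq, NNReal.coe_pow] using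
      (hf.toLipschitzWith.iterate n).dist_le_mul y x
  have hlim : Tendsto (fun n => f^[n] y) atTop (𝓝 x) := by
    rw [tendsto_iff_dist_tendsto_zero]
    refine squeeze_zero (fun _ => dist_nonneg) hdist ?_
    simpa using (tendsto_pow_atTop_nhds_zero_of_lt_one K.2 hf.1).mul_const (dist y x)
  exact hs.mem_of_tendsto hlim (Eventually.of_forall fun n => hmaps.iterate n hy)

section Bellman

variable {S A : ℕ} {P : Fin S → Fin S → Fin A → ℝ} {γ : ℝ}

theorem lipschitzWith_bellman (hP0 : ∀ s' s a, 0 ≤ P s' s a)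
    (hP1 : ∀ s a, ∑ s' : Fin S, P s' s a = 1) (hγ : 0 ≤ γ) (C : Fin S → Fin A → ℝ) :
    LipschitzWith γ.toNNReal (bellman S A P γ C) := by
  refine lipschitzWith_pi fun s => LipschitzWith.iInf_of_finite fun a => ?_
  have hE := (lipschitzWith_sum_mul (hP0 · s a) (hP1 s a)).dist_le_mul
  refine LipschitzWith.of_dist_le_mul fun V W => ?_
  rw [Real.coe_toNNReal γ hγ, dist_add_left, Real.dist_eq, ← mul_sub, abs_mul,
    abs_of_nonneg hγ, ← Real.dist_eq]
  simpa only [NNReal.coe_one, one_mul] using mul_le_mul_of_nonneg_left (hE V W) hγ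

theorem isClosed_setBellman (𝒞 : Set (Fin S → Fin A → ℝ)) (𝒱 : Set (Fin S → ℝ)) :
    IsClosed (setBellman S A P γ 𝒞 𝒱) :=
  isClosed_closure

theorem bellman_mem_setBellman {𝒞 : Set (Fin S → Fin A → ℝ)} {𝒱 : Set (Fin S → ℝ)}
    {C : Fin S → Fin A → ℝ} {V : Fin S → ℝ} (hC : C ∈ 𝒞) (hV : V ∈ 𝒱) :
    bellman S A P γ C V ∈ setBellman S A P γ 𝒞 𝒱 :=
  subset_closure (mem_biUnion hC (mem_biUnion hV rfl))

end Bellman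

theorem fixed_point_mem_fixed_point_set_general (S A : ℕ)
    (P : Fin S → Fin S → Fin A → ℝ)
    (hP0 : ∀ s' s a, 0 ≤ P s' s a)
    (hP1 : ∀ s a, ∑ s' : Fin S, P s' s a = 1)
    (γ : ℝ) (hγ : γ ∈ Set.Ioo (0 : ℝ) 1)
    (𝒞 : Set (Fin S → Fin A → ℝ))
    (Vstar : Set (Fin S → ℝ)) (hVne : Vstar.Nonempty)
    (hVfix : setBellman S A P γ 𝒞 Vstar = Vstar)
    (C : Fin S → Fin A → ℝ) (hC : C ∈ 𝒞)
    (V : Fin S → ℝ) (hV : bellman S A P γ C V = V) :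
    V ∈ Vstar := by
  have hcontr : ContractingWith γ.toNNReal (bellman S A P γ C) :=
    ⟨Real.toNNReal_lt_one.2 hγ.2, lipschitzWith_bellman hP0 hP1 hγ.1.le C⟩
  have hclosed : IsClosed Vstar := hVfix ▸ isClosed_setBellman 𝒞 Vstar
  have hmaps : MapsTo (bellman S A P γ C) Vstar Vstar := fun W hW =>
    hVfix ▸ bellman_mem_setBellman hC hW
  exact hcontr.mem_of_isFixedPt hclosed hVne hmaps hV

theorem fixed_point_mem_fixed_point_set (S A : ℕ) (hS : 0 < S) (hA : 0 < A)
    (P : Fin S → Fin S → Fin A → ℝ)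
    (hP0 : ∀ s' s a, 0 ≤ P s' s a)
    (hP1 : ∀ s a, ∑ s' : Fin S, P s' s a = 1)
    (γ : ℝ) (hγ : γ ∈ Set.Ioo (0 : ℝ) 1)
    (𝒞 : Set (Fin S → Fin A → ℝ)) (h𝒞ne : 𝒞.Nonempty) (h𝒞c : IsCompact 𝒞)
    (Vstar : Set (Fin S → ℝ)) (hVne : Vstar.Nonempty) (hVc : IsCompact Vstar)
    (hVfix : setBellman S A P γ 𝒞 Vstar = Vstar)
    (C : Fin S → Fin A → ℝ) (hC : C ∈ 𝒞)
    (V : Fin S → ℝ) (hV : bellman S A P γ C V = V) :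
    V ∈ Vstar :=
  fixed_point_mem_fixed_point_set_general S A P hP0 hP1 γ hγ 𝒞 Vstar hVne hVfix C hC V hV
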